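/- Let G = (V,E) be a finite directed acyclic graph with no multiple edges. Then G is singly-connected if and only if for every source v (vertex of indegree 0) and every vertex w ∈ V there is at most one simple path from v to w in G. -/

import Mathlib

/-- A simple (directed) path from `v` to `w` in the directed graph with edge relation `E`:
a nonempty list of pairwise distinct vertices starting at `v`, ending at `w`,
with consecutive vertices joined by edges. -/
def IsSimplePath {V : Type*} (E : V → V → Prop) (v w : V) (p : List V) : Prop :=
  p.Chain' E ∧ p.head? = some v ∧ p.getLast? = some w ∧ p.Nodup

/-- A directed graph is singly-connected if for every pair of vertices there is
at most one simple path between them. -/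
def SinglyConnected {V : Type*} (E : V → V → Prop) : Prop :=
  ∀ v w : V, ∀ p q : List V, IsSimplePath E v w p → IsSimplePath E v w q → p = q

/-- A directed graph is acyclic if it has no directed cycle. -/
def DAcyclic {V : Type*} (E : V → V → Prop) : Prop :=
  ∀ v : V, ¬ Relation.TransGen E v v

/-!
Prepending a predecessor `x` of `v` to a simple path from `v` gives a simple path from `x`
(acyclicity keeps `x` off the path), and prepending is injective; so if paths from `x` are
unique, so are paths from `v`. In a finite acyclic graph the edge relation is well-founded
and its minimal elements are exactly the sources, so uniqueness spreads from the sources to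
every vertex by well-founded induction.
-/

theorem List.IsChain.reflTransGen_of_head?_of_mem {α : Type*} {r : α → α → Prop} {l : List α}
    {a b : α} (hl : l.IsChain r) (ha : l.head? = some a) (hb : b ∈ l) :
    Relation.ReflTransGen r a b := by
  obtain ⟨t, rfl⟩ := List.head?_eq_some_iff.1 ha
  exact hl.induction (Relation.ReflTransGen r a ·) _ (fun _ _ hxy hax => hax.tail hxy)
    (fun _ => .refl) b hb

section

variable {V : Type*} {E : V → V → Prop}

theorem DAcyclic.wellFounded [Finite V] (hacyc : DAcyclic E) : WellFounded E :=
  haveI : IsTrans V (Relation.TransGen E) := ⟨fun _ _ _ => .trans⟩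
  haveI : Std.Irrefl (Relation.TransGen E) := ⟨hacyc⟩
  Subrelation.wf Relation.TransGen.single (Finite.wellFounded_of_trans_of_irrefl _)

theorem DAcyclic.notMem_of_isSimplePath (hacyc : DAcyclic E) {v w x : V} {p : List V}
    (hp : IsSimplePath E v w p) (hx : E x v) : x ∉ p := fun hxp =>
  hacyc v (.tail' (hp.1.reflTransGen_of_head?_of_mem hp.2.1 hxp) hx)

theorem IsSimplePath.cons (hacyc : DAcyclic E) {v w x : V} {p : List V}
    (hp : IsSimplePath E v w p) (hx : E x v) : IsSimplePath E x w (x :: p) := by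
  obtain ⟨hc, hh, hl, hn⟩ := hp
  obtain ⟨t, rfl⟩ := List.head?_eq_some_iff.1 hh
  refine ⟨hc.cons_cons hx, rfl, by rwa [List.getLast?_cons_cons], ?_⟩
  exact hn.cons (hacyc.notMem_of_isSimplePath ⟨hc, hh, hl, hn⟩ hx)

def HasUniquePathsFrom (E : V → V → Prop) (v : V) : Prop :=
  ∀ w : V, ∀ p q : List V, IsSimplePath E v w p → IsSimplePath E v w q → p = q

theorem HasUniquePathsFrom.of_edge (hacyc : DAcyclic E) {v x : V} (hx : E x v)
    (hux : HasUniquePathsFrom E x) : HasUniquePathsFrom E v := fun w _ _ hp hq =>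
  List.cons_injective (hux w _ _ (hp.cons hacyc hx) (hq.cons hacyc hx))

end

/-- a finite DAG (without multiple edges, which is automatic for a graph
given by an edge relation) is singly-connected iff for every source `v` (vertex of
indegree 0) and every vertex `w` there is at most one simple path from `v` to `w`. -/
theorem singlyConnected_iff_unique_paths_from_sources {V : Type*} [Finite V]
    (E : V → V → Prop) (hacyc : DAcyclic E) :
    SinglyConnected E ↔
      ∀ v : V, (∀ x : V, ¬ E x v) → ∀ w : V, ∀ p q : List V,
        IsSimplePath E v w p → IsSimplePath E v w q → p = q := by
  refine ⟨fun h v _ => h v, fun h => ?_⟩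
  show ∀ v, HasUniquePathsFrom E v
  intro v
  induction v using hacyc.wellFounded.induction with
  | _ v ih =>
    by_cases hpred : ∃ x, E x v
    · obtain ⟨x, hx⟩ := hpred
      exact (ih x hx).of_edge hacyc hx
    · exact h v (not_exists.1 hpred)
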